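/- For square-integrable random vectors: E‖v_θ(t, x_t) - u_t(x_t)‖² differs from E_z E‖v_θ(t, x_t) - u_t(x_t | z)‖² by a constant independent of θ, where u_t(x) = E[u_t(x | z) | x_t = x]. Hence the gradients with respect to the parameter of v_θ of the two losses agree: minimizing the conditional (tractable) loss is equivalent to minimizing the marginal loss. -/

import Mathlib

/-!
With `V = E[U | m]`, expand `‖A - U‖² = ‖(A - V) + (V - U)‖²`. The cross term has zero mean:
`A - V` is `m`-measurable, so by the pull-out property `E⟪A - V, U⟫ = E⟪A - V, E[U | m]⟫`,
i.e. `V - U` is orthogonal in `L²` to every `m`-measurable square-integrable function.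
-/

open MeasureTheory ProbabilityTheory
open scoped InnerProductSpace

section

variable {Ω E : Type*} {m m₀ : MeasurableSpace Ω} {μ : Measure Ω}
  [NormedAddCommGroup E] [InnerProductSpace ℝ E]

theorem MeasureTheory.MemLp.integrable_inner {f g : Ω → E} (hf : MemLp f 2 μ)
    (hg : MemLp g 2 μ) : Integrable (fun ω => ⟪f ω, g ω⟫_ℝ) μ :=
  memLp_one_iff_integrable.1 ((innerSL ℝ).memLp_of_bilin 1 hf hg)

variable [CompleteSpace E]

theorem integral_inner_condExp_of_stronglyMeasurable_left (hm : m ≤ m₀)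
    [SigmaFinite (μ.trim hm)] {g U : Ω → E} (hg : StronglyMeasurable[m] g)
    (hgU : Integrable (fun ω => ⟪g ω, U ω⟫_ℝ) μ) (hU : Integrable U μ) :
    ∫ ω, ⟪g ω, μ[U|m] ω⟫_ℝ ∂μ = ∫ ω, ⟪g ω, U ω⟫_ℝ ∂μ := calc
  _ = ∫ ω, μ[fun ω => ⟪g ω, U ω⟫_ℝ|m] ω ∂μ :=
    integral_congr_ae (condExp_bilin_of_stronglyMeasurable_left (innerSL ℝ) hg hgU hU).symm
  _ = ∫ ω, ⟪g ω, U ω⟫_ℝ ∂μ := integral_condExp hm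

theorem integral_norm_sub_sq_eq_add_condExp (hm : m ≤ m₀) [IsFiniteMeasure μ]
    {A U : Ω → E} (hAm : StronglyMeasurable[m] A) (hA : MemLp A 2 μ) (hU : MemLp U 2 μ) :
    ∫ ω, ‖A ω - U ω‖ ^ 2 ∂μ
      = ∫ ω, ‖A ω - μ[U|m] ω‖ ^ 2 ∂μ + ∫ ω, ‖μ[U|m] ω - U ω‖ ^ 2 ∂μ := by
  set V := μ[U|m]
  have hV : MemLp V 2 μ := hU.condExp one_le_two
  have hAV : MemLp (fun ω => A ω - V ω) 2 μ := hA.sub hV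
  have hVU : MemLp (fun ω => V ω - U ω) 2 μ := hV.sub hU
  have hcross : ∫ ω, ⟪A ω - V ω, V ω - U ω⟫_ℝ ∂μ = 0 := by
    have hpull := integral_inner_condExp_of_stronglyMeasurable_left (g := fun ω => A ω - V ω) hm
      (hAm.sub stronglyMeasurable_condExp) (hAV.integrable_inner hU) (hU.integrable one_le_two)
    simp only [inner_sub_right]
    rw [integral_sub (hAV.integrable_inner hV) (hAV.integrable_inner hU), hpull, sub_self]
  have hpointwise : ∀ ω, ‖A ω - U ω‖ ^ 2
      = ‖A ω - V ω‖ ^ 2 + 2 * ⟪A ω - V ω, V ω - U ω⟫_ℝ + ‖V ω - U ω‖ ^ 2 := fun ω => by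
    rw [← norm_add_sq_real, sub_add_sub_cancel]
  have hAV2 : Integrable (fun ω => ‖A ω - V ω‖ ^ 2) μ :=
    (memLp_two_iff_integrable_sq_norm hAV.1).1 hAV
  have hVU2 : Integrable (fun ω => ‖V ω - U ω‖ ^ 2) μ :=
    (memLp_two_iff_integrable_sq_norm hVU.1).1 hVU
  have hI := (hAV.integrable_inner hVU).const_mul 2
  simp only [hpointwise]
  rw [integral_add ?_ hVU2, integral_add hAV2 hI, integral_const_mul, hcross, mul_zero, add_zero]
  exact hAV2.add hI

end

theorem conditional_marginal_loss_pythagoras_general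
    (d : ℕ) (Ω : Type*) [MeasureSpace Ω] [IsProbabilityMeasure (ℙ : Measure Ω)]
    (xt : Ω → EuclideanSpace ℝ (Fin d)) (hxt : Measurable xt)
    (U : Ω → EuclideanSpace ℝ (Fin d)) (hU : MemLp U 2 (ℙ : Measure Ω))
    (ubar : EuclideanSpace ℝ (Fin d) → EuclideanSpace ℝ (Fin d))
    (hcond : (ℙ : Measure Ω)[U | MeasurableSpace.comap xt inferInstance]
        =ᵐ[(ℙ : Measure Ω)] fun ω => ubar (xt ω))
    (f : EuclideanSpace ℝ (Fin d) → EuclideanSpace ℝ (Fin d)) (hf : Measurable f)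
    (hf2 : MemLp (fun ω => f (xt ω)) 2 (ℙ : Measure Ω)) :
    (∫ ω, ‖f (xt ω) - U ω‖ ^ 2)
      = (∫ ω, ‖f (xt ω) - ubar (xt ω)‖ ^ 2) + ∫ ω, ‖ubar (xt ω) - U ω‖ ^ 2 := by
  have hfxt : StronglyMeasurable[MeasurableSpace.comap xt inferInstance] fun ω => f (xt ω) :=
    (hf.comp (comap_measurable xt)).stronglyMeasurable
  rw [integral_norm_sub_sq_eq_add_condExp hxt.comap_le hfxt hf2 hU]
  congr 1 <;> refine integral_congr_ae ?_ <;> filter_upwards [hcond] with ω hω <;> rw [hω]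

/-- Pythagorean decomposition for conditional flow matching: if `ubar ∘ xt` is (a version
of) the conditional expectation of the conditional field `U = u_t(x_t|z)` given `xt`,
then for every square-integrable predictor `f`,
`E‖f(x_t) - U‖² = E‖f(x_t) - ubar(x_t)‖² + E‖ubar(x_t) - U‖²`.
Hence the conditional (tractable) loss differs from the marginal loss by a constant
independent of the predictor, so their gradients in the parameters agree. -/
theorem conditional_marginal_loss_pythagoras
    (d : ℕ) (Ω : Type*) [MeasureSpace Ω] [IsProbabilityMeasure (ℙ : Measure Ω)]
    (xt : Ω → EuclideanSpace ℝ (Fin d)) (hxt : Measurable xt)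
    (U : Ω → EuclideanSpace ℝ (Fin d)) (hU : MemLp U 2 (ℙ : Measure Ω))
    (ubar : EuclideanSpace ℝ (Fin d) → EuclideanSpace ℝ (Fin d)) (hubar : Measurable ubar)
    (hcond : (ℙ : Measure Ω)[U | MeasurableSpace.comap xt inferInstance]
        =ᵐ[(ℙ : Measure Ω)] fun ω => ubar (xt ω))
    (f : EuclideanSpace ℝ (Fin d) → EuclideanSpace ℝ (Fin d)) (hf : Measurable f)
    (hf2 : MemLp (fun ω => f (xt ω)) 2 (ℙ : Measure Ω)) :
    (∫ ω, ‖f (xt ω) - U ω‖ ^ 2)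
      = (∫ ω, ‖f (xt ω) - ubar (xt ω)‖ ^ 2) + ∫ ω, ‖ubar (xt ω) - U ω‖ ^ 2 :=
  conditional_marginal_loss_pythagoras_general d Ω xt hxt U hU ubar hcond f hf hf2
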